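/- arXiv:0909.1424 — 3 statements merged into one kernel-verified Lean document; each statement's English description precedes it below -/
import Mathlib

section
/- Let {π1,π2} be a pair of negative skew-symmetric lexicographic arrays of degree 2t, and let (P^(0),Q^(0)),(P^(1),Q^(1)),…,(P^(t),Q^(t)) be the sequence of notched bitableaux produced by the OBRSK algorithm applied to {π1,π2}. Then for every i ∈ {1,…,t}, the notched tableau P^(i) is row strict. -/
/-!
Step `i` of OBRSK inserts `x = a_i` into `P` by bounded insertion with bound `b = b_i` and
appends `d = d_{t+1-i}` to the row where the insertion stops, so that row stays strict exactly
when all its entries are `< d`. Along the algorithm `d` weakly increases, since the transpose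
of `π2` is lexicographic. When it increases strictly, all earlier entries are at most the old
`d`, hence `< d`. When it repeats, duality forces `b` to repeat and lexicographicity of `π1`
gives `x' ≤ x`; as in the row bumping lemma, the new insertion then bumps, row by row, values
no larger than those placed by the previous one (all `< d`), and stops strictly below the
previous final row, where every entry is `< d`. The invariant `Prepared` records this,
remembering the previous bumping path only through the values it placed.
-/

namespace OBRSKPaper

/-! ### Pairs of two-row arrays -/

/-- A pair of two-row arrays of positive integers: `π1` has top row `b` and bottom row `a`;
`π2` has top row `c` and bottom row `d`.  Columns are listed from left to right. -/
structure ArrayPair where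
  a : List ℕ
  b : List ℕ
  c : List ℕ
  d : List ℕ

/-- The duality property for a list of (entry, dual entry) pairs: if `x ≤ y` then
`dual x ≥ dual y`, if `x < y` then `dual x > dual y`, and if `x = y` then `dual x = dual y`. -/
def DualityProp (l : List (ℕ × ℕ)) : Prop :=
  ∀ p ∈ l, ∀ q ∈ l,
    (p.1 ≤ q.1 → q.2 ≤ p.2) ∧ (p.1 < q.1 → q.2 < p.2) ∧ (p.1 = q.1 → p.2 = q.2)

/-- The two-row array with top row `top` and bottom row `bot` is lexicographic:
the top row weakly decreases, and bottom-row entries weakly decrease below equal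
top-row entries. -/
def LexTwoRow (top bot : List ℕ) : Prop :=
  ∀ k, k + 1 < top.length →
    top.getD (k+1) 0 ≤ top.getD k 0 ∧
    (top.getD (k+1) 0 = top.getD k 0 → bot.getD (k+1) 0 ≤ bot.getD k 0)

namespace ArrayPair

/-- The number of columns of each array of the pair. -/
def t (π : ArrayPair) : ℕ := π.b.length

/-- The degree of a pair of arrays: twice the number of columns. -/
def degree (π : ArrayPair) : ℕ := 2 * π.t

def eqLen (π : ArrayPair) : Prop :=
  π.a.length = π.t ∧ π.c.length = π.t ∧ π.d.length = π.t

/-- The list of (entry, dual entry) pairs of a pair of arrays: the dual of `a i` is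
`c (t+1-i)`, of `b i` is `d (t+1-i)`, of `c i` is `a (t+1-i)`, of `d i` is `b (t+1-i)`. -/
def entryDual (π : ArrayPair) : List (ℕ × ℕ) :=
  π.a.zip π.c.reverse ++ π.b.zip π.d.reverse ++ π.c.zip π.a.reverse ++ π.d.zip π.b.reverse

/-- `{π1, π2}` is a pair of skew-symmetric lexicographic arrays. -/
def SkewSymmLex (π : ArrayPair) : Prop :=
  π.eqLen ∧
  (∀ x ∈ π.a ++ π.b ++ π.c ++ π.d, 0 < x) ∧
  LexTwoRow π.b π.a ∧
  LexTwoRow π.d π.c ∧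
  (∀ p ∈ π.a.zip π.d.reverse, p.1 < p.2) ∧
  (∀ p ∈ π.b.zip π.c.reverse, p.1 < p.2) ∧
  DualityProp π.entryDual ∧
  (∀ i < π.t,
    (π.a.getD i 0 < π.b.getD i 0 → π.d.getD (π.t - 1 - i) 0 < π.c.getD (π.t - 1 - i) 0) ∧
    (π.b.getD i 0 < π.a.getD i 0 → π.c.getD (π.t - 1 - i) 0 < π.d.getD (π.t - 1 - i) 0))

def Negative (π : ArrayPair) : Prop := ∀ p ∈ π.a.zip π.b, p.1 < p.2

def Positive (π : ArrayPair) : Prop := ∀ p ∈ π.a.zip π.b, p.2 < p.1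

def Nonvanishing (π : ArrayPair) : Prop := ∀ p ∈ π.a.zip π.b, p.1 ≠ p.2

/-- The negative part of a pair: the columns of `π1` with `a i < b i`, together with
their dual columns of `π2` (those with `d j < c j`). -/
def negPart (π : ArrayPair) : ArrayPair where
  a := ((π.a.zip π.b).filter (fun p => decide (p.1 < p.2))).map Prod.fst
  b := ((π.a.zip π.b).filter (fun p => decide (p.1 < p.2))).map Prod.snd
  c := ((π.c.zip π.d).filter (fun p => decide (p.2 < p.1))).map Prod.fst
  d := ((π.c.zip π.d).filter (fun p => decide (p.2 < p.1))).map Prod.snd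

/-- The positive part of a pair: the columns of `π1` with `a i > b i`, together with
their dual columns of `π2`. -/
def posPart (π : ArrayPair) : ArrayPair where
  a := ((π.a.zip π.b).filter (fun p => decide (p.2 < p.1))).map Prod.fst
  b := ((π.a.zip π.b).filter (fun p => decide (p.2 < p.1))).map Prod.snd
  c := ((π.c.zip π.d).filter (fun p => decide (p.1 < p.2))).map Prod.fst
  d := ((π.c.zip π.d).filter (fun p => decide (p.1 < p.2))).map Prod.snd

/-- The bijection ψ from pairs of arrays to pairs of multisets on ℕ²:
`{(b/a),(c/d)} ↦ ({(a i, b i)}, {(d i, c i)})`. -/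
def toMS (π : ArrayPair) : Multiset (ℕ × ℕ) × Multiset (ℕ × ℕ) :=
  (↑(π.a.zip π.b), ↑(π.d.zip π.c))

/-- The pair corresponding to `{U1^(k), U2^(k)}` : the first `k` columns of `π1`
together with the last `k` columns of `π2`. -/
def prefixPair (π : ArrayPair) (k : ℕ) : ArrayPair :=
  ⟨π.a.take k, π.b.take k, π.c.drop (π.t - k), π.d.drop (π.t - k)⟩

end ArrayPair

/-- Comparison placing columns in decreasing lexicographic order. -/
def lexSortKey : ℕ × ℕ → ℕ × ℕ → Bool := fun x y =>
  decide (y.1 < x.1 ∨ (x.1 = y.1 ∧ y.2 ≤ x.2))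

/-- The involution `L` : `L {π1, π2} := {l(π1), lᵗ(π2)}`, where `l` switches the two rows
and rearranges columns so that the result is lexicographic, and `lᵗ` switches the two rows
and rearranges columns so that the transpose of the result is lexicographic. -/
def Lmap (π : ArrayPair) : ArrayPair :=
  let s1 := (π.a.zip π.b).mergeSort lexSortKey
  let s2 := (π.c.zip π.d).mergeSort lexSortKey
  ⟨s1.map Prod.snd, s1.map Prod.fst, s2.map Prod.snd, s2.map Prod.fst⟩

/-! ### Notched bitableaux -/

/-- A notched bitableau: a pair of fillings (lists of rows, top to bottom). -/
structure Bitab where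
  P : List (List ℕ)
  Q : List (List ℕ)

/-- Count, as an integer, of entries of the list that are `≤ z`. -/
def cntLE (l : List ℕ) (z : ℕ) : ℤ := ((l.filter (fun x => decide (x ≤ z))).length : ℤ)

/-- `diffLE A B A' B'` expresses `A − B ≤ A' − B'` for the multisets
`A − B := A ∪̇ (ℕ∖B)`: for every `z`, the number of elements `≤ z` of `A − B` is at least
the number of elements `≤ z` of `A' − B'`. -/
def diffLE (A B A' B' : List ℕ) : Prop :=
  ∀ z : ℕ, cntLE A' z - cntLE B' z ≤ cntLE A z - cntLE B z

/-- `diffLT A B A' B'` expresses `A − B < A' − B'`. -/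
def diffLT (A B A' B' : List ℕ) : Prop := diffLE A B A' B' ∧ ¬ diffLE A' B' A B

namespace Bitab

/-- The degree: total number of boxes of `P`. -/
def degree (B : Bitab) : ℕ := (B.P.map List.length).sum

def SameShape (B : Bitab) : Prop := B.P.map List.length = B.Q.map List.length

def RowStrict (B : Bitab) : Prop :=
  (∀ r ∈ B.P, r.Pairwise (· < ·)) ∧ (∀ r ∈ B.Q, r.Pairwise (· < ·))

def EntriesPos (B : Bitab) : Prop :=
  (∀ r ∈ B.P, ∀ x ∈ r, 0 < x) ∧ (∀ r ∈ B.Q, ∀ x ∈ r, 0 < x)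

def Semistandard (B : Bitab) : Prop :=
  B.SameShape ∧ B.RowStrict ∧ B.EntriesPos ∧
  ∀ i, i + 1 < B.P.length →
    diffLE (B.P.getD i []) (B.Q.getD i []) (B.P.getD (i+1) []) (B.Q.getD (i+1) [])

/-- Negative: semistandard and the last row satisfies `P_r − Q_r < ∅`. -/
def Negative (B : Bitab) : Prop :=
  B.Semistandard ∧ ∀ i, B.P.length = i + 1 → diffLT (B.P.getD i []) (B.Q.getD i []) [] []

/-- Positive: semistandard and the first row satisfies `∅ < P_1 − Q_1`. -/
def Positive (B : Bitab) : Prop :=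
  B.Semistandard ∧ (B.P ≠ [] → diffLT [] [] (B.P.getD 0 []) (B.Q.getD 0 []))

/-- Nonvanishing: semistandard and every row is negative or positive. -/
def Nonvanishing (B : Bitab) : Prop :=
  B.Semistandard ∧ ∀ i < B.P.length,
    diffLT (B.P.getD i []) (B.Q.getD i []) [] [] ∨ diffLT [] [] (B.P.getD i []) (B.Q.getD i [])

/-- The list of (entry, dual entry) pairs of a notched bitableau: the dual of the entry in
position `(i,j)` of `P` is the entry in position `(i, k_i+1−j)` of `Q` and vice versa. -/
def entryDual (B : Bitab) : List (ℕ × ℕ) :=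
  ((B.P.zip B.Q).map (fun pq => pq.1.zip pq.2.reverse)).flatten ++
  ((B.P.zip B.Q).map (fun pq => pq.2.zip pq.1.reverse)).flatten

/-- A skew-symmetric notched bitableau: semistandard, of even size, satisfying the
duality property. -/
def SkewSymm (B : Bitab) : Prop :=
  B.Semistandard ∧ (∀ r ∈ B.P, Even r.length) ∧ DualityProp B.entryDual

end Bitab

/-- The involution ι : reverse the order of the rows of `(Q, P)`. -/
def iota (B : Bitab) : Bitab := ⟨B.Q.reverse, B.P.reverse⟩

/-! ### The OBRSK algorithm -/

/-- Insert `x` into the list `l` at (0-based) position `i`, shifting later entries right. -/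
def insertAt (l : List ℕ) (i : ℕ) (x : ℕ) : List ℕ := l.take i ++ x :: l.drop i

/-- One row of bounded insertion: `x` bumps the smallest entry of the row that is `≥ x`
and `< b`; if there is no such entry, `x` is placed in a new box at the right end of the
entries `< b`.  Returns the new row, the bumped entry (if any), and the 1-indexed forward
position of the new/overwritten box. -/
def insertRowP (b x : ℕ) (row : List ℕ) : List ℕ × Option ℕ × ℕ :=
  match row.findIdx? (fun y => decide (x ≤ y ∧ y < b)) with
  | some j => (row.set j x, some (row.getD j 0), j + 1)
  | none =>
      let j := (row.takeWhile (fun y => decide (y < b))).length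
      (insertAt row j x, none, j + 1)

/-- Bounded insertion of `x` into the rows of `P`, bounded by `b`.  Returns the new rows
and the list of 1-indexed forward positions of the bumped/new boxes, row by row. -/
def insertP (b : ℕ) : List (List ℕ) → ℕ → List (List ℕ) × List ℕ
  | [], x => ([[x]], [1])
  | row :: rest, x =>
      match insertRowP b x row with
      | (row', none, j) => (row' :: rest, [j])
      | (row', some y, j) =>
          let (rest', js) := insertP b rest y
          (row' :: rest', j :: js)

/-- Dual insertion of `x` into the rows of `Q`, at the backward positions recorded in `js`:
in each intermediate row the backward `j`-th entry is bumped, and in the final row the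
incoming value is placed in a new box at the backward `j`-th position. -/
def insertQ : List (List ℕ) → List ℕ → ℕ → List (List ℕ)
  | rows, [], _ => rows
  | [], _ :: _, x => [[x]]
  | row :: rest, [j], x => insertAt row (row.length + 1 - j) x :: rest
  | row :: rest, j :: js, x =>
      row.set (row.length - j) x :: insertQ rest js (row.getD (row.length - j) 0)

/-- Modify the `k`-th (0-based) row of a list of rows. -/
def modifyRow (rows : List (List ℕ)) (k : ℕ) (f : List ℕ → List ℕ) : List (List ℕ) :=
  rows.take k ++ (match rows.drop k with
    | [] => []
    | r :: rest => f r :: rest)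

/-- One step of the OBRSK algorithm, applied with the quadruple
`(a_{i+1}, b_{i+1}, c_{t−i}, d_{t−i})`. -/
def obrskStep (PQ : List (List ℕ) × List (List ℕ)) (q : ℕ × ℕ × ℕ × ℕ) :
    List (List ℕ) × List (List ℕ) :=
  let (x, b, c, d) := q
  let Pjs := insertP b PQ.1 x
  let K := Pjs.2.length
  let Q' := insertQ PQ.2 Pjs.2 c
  (modifyRow Pjs.1 (K - 1) (fun r => r ++ [d]), modifyRow Q' (K - 1) (fun r => b :: r))

/-- The list of quadruples `(a_{i+1}, b_{i+1}, c_{t−i}, d_{t−i})`, `i = 0, …, t−1`. -/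
def ArrayPair.quads (π : ArrayPair) : List (ℕ × ℕ × ℕ × ℕ) :=
  π.a.zip (π.b.zip (π.c.reverse.zip π.d.reverse))

/-- The notched bitableau `(P^(i), Q^(i))` produced after `i` steps of the OBRSK algorithm. -/
def stepState (π : ArrayPair) (i : ℕ) : List (List ℕ) × List (List ℕ) :=
  (π.quads.take i).foldl obrskStep ([], [])

/-- The OBRSK correspondence on pairs of negative skew-symmetric lexicographic arrays:
`OBRSK {π1, π2} := (P^(t), Q^(t))`. -/
def OBRSKneg (π : ArrayPair) : Bitab :=
  ⟨(stepState π π.t).1, (stepState π π.t).2⟩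

/-- The OBRSK correspondence on pairs of positive skew-symmetric lexicographic arrays. -/
def OBRSKpos (π : ArrayPair) : Bitab := iota (OBRSKneg (Lmap π))

/-- The OBRSK correspondence on pairs of nonvanishing skew-symmetric lexicographic arrays:
the bitableau whose negative and positive parts are the OBRSK images of the negative and
positive parts of the pair. -/
def OBRSK (π : ArrayPair) : Bitab :=
  ⟨(OBRSKneg π.negPart).P ++ (OBRSKpos π.posPart).P,
   (OBRSKneg π.negPart).Q ++ (OBRSKpos π.posPart).Q⟩

/-! ### The reverse step -/

/-- One row of reverse bounded insertion: the incoming entry `x` bumps the largest entry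
of the row smaller than `x`.  Returns the new row, the bumped-out entry, and the 1-indexed
forward position of the bumped box. -/
def revBumpRow (x : ℕ) (row : List ℕ) : List ℕ × ℕ × ℕ :=
  let k := (row.filter (fun y => decide (y < x))).length
  (row.set (k - 1) x, row.getD (k - 1) 0, k)

/-- Reverse bounded insertion upward through the given rows (listed bottom-to-top);
returns the new rows, the ejected entry, and the positions of the bumped boxes. -/
def revInsertUp : List (List ℕ) → ℕ → List (List ℕ) × ℕ × List ℕ
  | [], x => ([], x, [])
  | row :: rest, x =>
      let rj := revBumpRow x row
      let rec' := revInsertUp rest rj.2.1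
      (rj.1 :: rec'.1, rec'.2.1, rj.2.2 :: rec'.2.2)

/-- Dual reverse insertion upward through the given rows of `Q` (listed bottom-to-top),
along the dual (backward) positions `js`; returns the new rows and the ejected entry. -/
def revInsertUpQ : List (List ℕ) → List ℕ → ℕ → List (List ℕ) × ℕ
  | rows, [], x => (rows, x)
  | [], _ :: _, x => ([], x)
  | row :: rest, j :: js, x =>
      let idx := row.length - j
      let rec' := revInsertUpQ rest js (row.getD idx 0)
      (row.set idx x :: rec'.1, rec'.2)

/-- One reverse step of OBRSK: produces `(P', Q')` and the integers `a, b, c, d`. -/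
def reverseStep (B : Bitab) : Bitab × ℕ × ℕ × ℕ × ℕ :=
  let b := (B.Q.flatten.min?).getD 0
  let s := B.Q.length - 1 - B.Q.reverse.findIdx (fun r => r.contains b)
  let d := ((B.P.getD s []).getLast?).getD 0
  let P1 := modifyRow B.P s List.dropLast
  let Q1 := modifyRow B.Q s List.tail
  let rowS := P1.getD s []
  let k0 := (rowS.filter (fun y => decide (y < b))).length
  let x := rowS.getD (k0 - 1) 0
  let rowS' := rowS.eraseIdx (k0 - 1)
  let up := revInsertUp (P1.take s).reverse x
  let P' := up.1.reverse ++ rowS' :: P1.drop (s + 1)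
  let rowQ := Q1.getD s []
  let vQ := rowQ.getD (rowQ.length - k0) 0
  let rowQ' := rowQ.eraseIdx (rowQ.length - k0)
  let upQ := revInsertUpQ (Q1.take s).reverse up.2.2 vQ
  let Q' := upQ.1.reverse ++ rowQ' :: Q1.drop (s + 1)
  (⟨P'.filter (fun r => decide (r ≠ [])), Q'.filter (fun r => decide (r ≠ []))⟩,
    up.2.1, b, upQ.2, d)

/-! ### Multisets on ℕ², chains, boundedness -/

/-- The order on multisets on ℕ² : `msLE S T` means `S ≤ T`, i.e.
`S₍₁₎ − S₍₂₎ ≤ T₍₁₎ − T₍₂₎`. -/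
def msLE (S T : Multiset (ℕ × ℕ)) : Prop :=
  ∀ z : ℕ,
    ((T.filter (fun p => p.1 ≤ z)).card : ℤ) - ((T.filter (fun p => p.2 ≤ z)).card : ℤ) ≤
    ((S.filter (fun p => p.1 ≤ z)).card : ℤ) - ((S.filter (fun p => p.2 ≤ z)).card : ℤ)

namespace Bitab

/-- `(P,Q)^up` : the multiset of pairs formed by the top rows. -/
def up (B : Bitab) : Multiset (ℕ × ℕ) := ↑((B.P.getD 0 []).zip (B.Q.getD 0 []))

/-- `(P,Q)^down` : the multiset of pairs formed by the bottom rows. -/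
def down (B : Bitab) : Multiset (ℕ × ℕ) :=
  ↑((B.P.getD (B.P.length - 1) []).zip (B.Q.getD (B.Q.length - 1) []))

end Bitab

/-- `σ` represents a dual pair of chains in ℕ² : `σ` is a pair of skew-symmetric
lexicographic arrays whose first array lists a chain (first coordinates strictly
increasing, second coordinates strictly decreasing along the columns). -/
def IsChainArr (σ : ArrayPair) : Prop :=
  σ.SkewSymmLex ∧ List.Chain' (· < ·) σ.a ∧ List.Chain' (· > ·) σ.b

/-- `σ` represents a dual pair of chains in the pair of skew-symmetric multisets
represented by `π` : both chains are contained in the respective underlying sets, and for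
each column of the chain array, the dual column within `π` of its leftmost occurrence
coincides with its dual column within `σ`. -/
def DualChainIn (π σ : ArrayPair) : Prop :=
  IsChainArr σ ∧
  (∀ x ∈ σ.a.zip σ.b, x ∈ π.a.zip π.b) ∧
  (∀ x ∈ σ.d.zip σ.c, x ∈ π.d.zip π.c) ∧
  (∀ i < σ.t,
    (π.c.getD (π.t - 1 - (π.b.zip π.a).findIdx (fun x => x == (σ.b.getD i 0, σ.a.getD i 0))) 0,
     π.d.getD (π.t - 1 - (π.b.zip π.a).findIdx (fun x => x == (σ.b.getD i 0, σ.a.getD i 0))) 0)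
      = (σ.c.getD (σ.t - 1 - i) 0, σ.d.getD (σ.t - 1 - i) 0))

/-- The pair represented by `π` is bounded below by `T` : for every dual pair of chains in
it, `T ≤ OBRSK(negative part of the chain pair)^up`. -/
def PairBoundedT (π : ArrayPair) (T : Finset (ℕ × ℕ)) : Prop :=
  ∀ σ : ArrayPair, DualChainIn π σ → msLE ↑T.val (OBRSK σ.negPart).up

/-- The pair represented by `π` is bounded above by `W` : for every dual pair of chains in
it, `OBRSK(positive part of the chain pair)^down ≤ W`. -/
def PairBoundedW (π : ArrayPair) (W : Finset (ℕ × ℕ)) : Prop :=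
  ∀ σ : ArrayPair, DualChainIn π σ → msLE (OBRSK σ.posPart).down ↑W.val

/-- The pair represented by `π` is bounded by `T, W`. -/
def PairBounded (π : ArrayPair) (T W : Finset (ℕ × ℕ)) : Prop :=
  PairBoundedT π T ∧ PairBoundedW π W

namespace Bitab

/-- The bitableau is bounded below by `T` : if its top row is negative (i.e. the negative
part is nonempty), then `T₍₁₎ − T₍₂₎ ≤ P₁⁻ − Q₁⁻`. -/
def BoundedByT (B : Bitab) (T : Finset (ℕ × ℕ)) : Prop :=
  diffLT (B.P.getD 0 []) (B.Q.getD 0 []) [] [] →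
    msLE ↑T.val ↑((B.P.getD 0 []).zip (B.Q.getD 0 []))

/-- The bitableau is bounded above by `W` : if its bottom row is positive (i.e. the
positive part is nonempty), then `P⁺_s − Q⁺_s ≤ W₍₁₎ − W₍₂₎`. -/
def BoundedByW (B : Bitab) (W : Finset (ℕ × ℕ)) : Prop :=
  diffLT [] [] (B.P.getD (B.P.length - 1) []) (B.Q.getD (B.Q.length - 1) []) →
    msLE ↑((B.P.getD (B.P.length - 1) []).zip (B.Q.getD (B.Q.length - 1) [])) ↑W.val

/-- The bitableau is bounded by `T, W`. -/
def BoundedBy (B : Bitab) (T W : Finset (ℕ × ℕ)) : Prop :=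
  B.BoundedByT T ∧ B.BoundedByW W

end Bitab

/-- A negative subset of ℕ². -/
def NegSubset (T : Finset (ℕ × ℕ)) : Prop := ∀ p ∈ T, p.1 < p.2

/-- A positive subset of ℕ². -/
def PosSubset (W : Finset (ℕ × ℕ)) : Prop := ∀ p ∈ W, p.2 < p.1

/-- The coordinate projections `T₍₁₎`, `T₍₂₎` have no repeated elements. -/
def ProjNodup (T : Finset (ℕ × ℕ)) : Prop :=
  (T.val.map Prod.fst).Nodup ∧ (T.val.map Prod.snd).Nodup

/-! ### The orthogonal Grassmannian combinatorics -/

/-- `Ĩ(d)` : the set of `d`-element subsets of `{1, …, 2d}` containing exactly one of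
`k, k* = 2d+1−k` for every `k`, with an even number of elements exceeding `d`. -/
def Itilde (d : ℕ) : Set (Finset ℕ) :=
  {v | v ⊆ Finset.Icc 1 (2 * d) ∧ v.card = d ∧
    (∀ k ∈ Finset.Icc 1 (2 * d), (k ∈ v ↔ (2 * d + 1 - k) ∉ v)) ∧
    Even ((v.filter (fun x => d < x)).card)}

/-- `OR(β) = {(r,c) : r ∈ β̄, c ∈ β, r < c*}`. -/
def ORset (d : ℕ) (β : Finset ℕ) : Set (ℕ × ℕ) :=
  {p | p.1 ∈ Finset.Icc 1 (2 * d) ∧ p.1 ∉ β ∧ p.2 ∈ β ∧ p.1 < 2 * d + 1 - p.2}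

/-- `U^# := {(c*, r*) : (r,c) ∈ U}` (with multiplicities). -/
def hashMS (d : ℕ) (U : Multiset (ℕ × ℕ)) : Multiset (ℕ × ℕ) :=
  U.map (fun p => (2 * d + 1 - p.2, 2 * d + 1 - p.1))

/-- `ψ(π)` is a pair of skew-symmetric multisets on `β̄×β`, i.e. of the form `{U, U^#}`
with `U` a multiset on `OR(β)`. -/
def ArrayPair.OnBB (d : ℕ) (β : Finset ℕ) (π : ArrayPair) : Prop :=
  (∀ x ∈ π.a.zip π.b, x ∈ ORset d β) ∧
  (↑(π.d.zip π.c) : Multiset (ℕ × ℕ)) = hashMS d ↑(π.a.zip π.b)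

/-- A skew-symmetric notched bitableau is on `β̄×β` : all entries of `P` are in `β̄`, all
entries of `Q` are in `β`, and every entry plus its dual equals `2d+1`. -/
def Bitab.OnBB (d : ℕ) (β : Finset ℕ) (B : Bitab) : Prop :=
  (∀ r ∈ B.P, ∀ x ∈ r, x ∈ Finset.Icc 1 (2 * d) ∧ x ∉ β) ∧
  (∀ r ∈ B.Q, ∀ x ∈ r, x ∈ β) ∧
  (∀ p ∈ B.entryDual, p.1 + p.2 = 2 * d + 1)

/-- The partial order on `Ĩ(d)` : `v ≤ w` iff the `i`-th smallest element of `v` is `≤`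
the `i`-th smallest element of `w` for every `i`. -/
def IleD (v w : Finset ℕ) : Prop :=
  v.card = w.card ∧
  ∀ i < v.card, (v.sort (· ≤ ·)).getD i 0 ≤ (w.sort (· ≤ ·)).getD i 0

def IltD (v w : Finset ℕ) : Prop := IleD v w ∧ v ≠ w

/-- `I_β(Skew-symm)` : pairs `(R, S)` with `R ⊆ β̄`, `S ⊆ β`, `|R| = |S|` even, and
`r_i + s_{2l+1−i} = 2d+1` for all `i`. -/
def IbSS (d : ℕ) (β : Finset ℕ) : Set (Finset ℕ × Finset ℕ) :=
  {RS | RS.1 ⊆ Finset.Icc 1 (2 * d) \ β ∧ RS.2 ⊆ β ∧ RS.1.card = RS.2.card ∧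
    Even RS.1.card ∧
    ∀ i < RS.1.card,
      (RS.1.sort (· ≤ ·)).getD i 0 + (RS.2.sort (· ≤ ·)).getD (RS.1.card - 1 - i) 0
        = 2 * d + 1}

/-- `θ_i := P_i ∪̇ (β ∖ Q_i)`. -/
def rowTheta (β : Finset ℕ) (p q : List ℕ) : Finset ℕ := p.toFinset ∪ (β \ q.toFinset)

/-- An extended `β`-chain, listed with strictly increasing rows and strictly decreasing
columns. -/
def IsExtChain (ch : List (ℕ × ℕ)) : Prop :=
  List.Chain' (fun x y => x.1 < y.1 ∧ y.2 < x.2) ch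

/-- The negative part `C⁻` of an extended chain: the elements `(r,c)` with `r < c`. -/
def chainNeg (ch : List (ℕ × ℕ)) : List (ℕ × ℕ) := ch.filter (fun p => decide (p.1 < p.2))

/-- The positive part `C⁺` of an extended chain: the elements `(r,c)` with `r > c`. -/
def chainPos (ch : List (ℕ × ℕ)) : List (ℕ × ℕ) := ch.filter (fun p => decide (p.2 < p.1))

/-- `ψ⁻¹({C, C^#})` : the pair of arrays corresponding to the dual pair of chains
`{C, C^#}` determined by an extended `β`-chain `C`. -/
def chainToPair (d : ℕ) (ch : List (ℕ × ℕ)) : ArrayPair :=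
  ⟨ch.map Prod.fst, ch.map Prod.snd,
   (ch.map (fun p => 2 * d + 1 - p.1)).reverse,
   (ch.map (fun p => 2 * d + 1 - p.2)).reverse⟩

/-- The terminating row number `K` of the bounded insertion performed at step `i`
(1-indexed) of the OBRSK algorithm. -/
def stepK (π : ArrayPair) (i : ℕ) : ℕ :=
  ((insertP (π.quads.getD (i - 1) (0, 0, 0, 0)).2.1 (stepState π (i - 1)).1
      (π.quads.getD (i - 1) (0, 0, 0, 0)).1).2).length

end OBRSKPaper

namespace OBRSKPaper

theorem pairwise_take_append_cons_drop {α : Type*} [Preorder α] {l : List α}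
    (hl : l.Pairwise (· < ·)) {i k : ℕ} {x : α}
    (hlt : ∀ y ∈ l.take i, y < x) (hgt : ∀ y ∈ l.drop k, x < y) :
    (l.take i ++ x :: l.drop k).Pairwise (· < ·) :=
  List.pairwise_append.2 ⟨hl.sublist (List.take_sublist _ _),
    List.pairwise_cons.2 ⟨hgt, hl.sublist (List.drop_sublist _ _)⟩,
    fun y hy z hz => (List.mem_cons.1 hz).elim (fun h => h ▸ hlt y hy)
      (fun h => (hlt y hy).trans (hgt z h))⟩

theorem exists_not_le_of_mem_dropWhile {α : Type*} [Preorder α] {p : α → Prop}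
    [DecidablePred p] {l : List α} (hl : l.Pairwise (· < ·)) {y : α}
    (hy : y ∈ l.dropWhile (p ·)) :
    ∃ z, ¬ p z ∧ z ≤ y := by
  rcases hdw : l.dropWhile (p ·) with _ | ⟨z, tl⟩
  · simp [hdw] at hy
  · have hz : ¬ p z := by
      simpa [hdw] using List.head_dropWhile_not (p ·) (l := l) (by simp [hdw])
    have hsorted : (z :: tl).Pairwise (· < ·) := hdw ▸ hl.sublist (List.dropWhile_sublist _)
    rw [hdw, List.mem_cons] at hy
    rcases hy with rfl | hy
    · exact ⟨y, hz, le_rfl⟩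
    · exact ⟨z, hz, (List.rel_of_pairwise_cons hsorted hy).le⟩

section RowInsertion

variable {b x : ℕ} {row : List ℕ}

theorem insertRowP_of_findIdx?_eq_some {j : ℕ}
    (h : row.findIdx? (fun y => decide (x ≤ y ∧ y < b)) = some j) :
    insertRowP b x row = (row.set j x, some (row.getD j 0), j + 1) := by
  simp only [insertRowP, h]

theorem insertRowP_of_findIdx?_eq_none
    (h : row.findIdx? (fun y => decide (x ≤ y ∧ y < b)) = none) :
    insertRowP b x row = (insertAt row (row.takeWhile (· < b)).length x, none,
      (row.takeWhile (· < b)).length + 1) := by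
  simp only [insertRowP, h]

theorem pairwise_insertRowP (hrow : row.Pairwise (· < ·)) (hxb : x < b) :
    (insertRowP b x row).1.Pairwise (· < ·) := by
  rcases h : row.findIdx? (fun y => decide (x ≤ y ∧ y < b)) with _ | j
  · rw [insertRowP_of_findIdx?_eq_none h, insertAt]
    have hnone := List.findIdx?_eq_none_iff.1 h
    have hsplit := List.takeWhile_append_dropWhile (p := (· < b)) (l := row)
    have htake := congrArg (List.take (row.takeWhile (· < b)).length) hsplit
    have hdrop := congrArg (List.drop (row.takeWhile (· < b)).length) hsplit
    rw [List.take_left' rfl] at htake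
    rw [List.drop_left' rfl] at hdrop
    apply pairwise_take_append_cons_drop hrow
    · intro y hy
      rw [← htake] at hy
      have hyb : y < b := by simpa using List.mem_takeWhile_imp hy
      have := hnone y (List.takeWhile_subset _ hy)
      simp only [decide_eq_false_iff_not, not_and, not_lt] at this
      omega
    · intro y hy
      rw [← hdrop] at hy
      obtain ⟨z, hz, hzy⟩ := exists_not_le_of_mem_dropWhile (p := (· < b)) hrow hy
      omega
  · obtain ⟨hj, hpj, hmin⟩ := List.findIdx?_eq_some_iff_getElem.1 h
    simp only [decide_eq_true_eq] at hpj
    rw [insertRowP_of_findIdx?_eq_some h, List.set_eq_take_append_cons_drop, if_pos hj]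
    apply pairwise_take_append_cons_drop hrow
    · intro y hy
      obtain ⟨k, hk, rfl⟩ := List.mem_take_iff_getElem.1 hy
      have hkj : row[k] < row[j] := List.pairwise_iff_getElem.1 hrow k j _ hj (by omega)
      have := hmin k (by omega)
      simp only [decide_eq_true_eq, not_and, not_lt] at this
      omega
    · intro y hy
      obtain ⟨k, hk, rfl⟩ := List.mem_drop_iff_getElem.1 hy
      have := List.pairwise_iff_getElem.1 hrow j (j + 1 + k) hj (by omega) (by omega)
      omega

theorem mem_insertRowP {z : ℕ} (hz : z ∈ (insertRowP b x row).1) : z ∈ row ∨ z = x := by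
  rcases h : row.findIdx? (fun y => decide (x ≤ y ∧ y < b)) with _ | j
  · rw [insertRowP_of_findIdx?_eq_none h, insertAt] at hz
    simp only [List.mem_append, List.mem_cons] at hz
    rcases hz with hz | hz | hz
    · exact .inl (List.mem_of_mem_take hz)
    · exact .inr hz
    · exact .inl (List.mem_of_mem_drop hz)
  · rw [insertRowP_of_findIdx?_eq_some h] at hz
    exact List.mem_or_eq_of_mem_set hz

theorem self_mem_insertRowP : x ∈ (insertRowP b x row).1 := by
  rcases h : row.findIdx? (fun y => decide (x ≤ y ∧ y < b)) with _ | j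
  · simp [insertRowP_of_findIdx?_eq_none h, insertAt]
  · rw [insertRowP_of_findIdx?_eq_some h]
    exact List.mem_set (List.findIdx?_eq_some_iff_getElem.1 h).1 x

theorem insertRowP_eq_some_spec (hrow : row.Pairwise (· < ·)) {y : ℕ}
    (h : (insertRowP b x row).2.1 = some y) :
    y ∈ row ∧ x ≤ y ∧ y < b ∧ ∀ v ∈ row, x ≤ v → v < b → y ≤ v := by
  rcases hf : row.findIdx? (fun y => decide (x ≤ y ∧ y < b)) with _ | j
  · simp [insertRowP_of_findIdx?_eq_none hf] at h
  · simp only [insertRowP_of_findIdx?_eq_some hf, Option.some.injEq] at h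
    subst h
    obtain ⟨hj, hpj, hmin⟩ := List.findIdx?_eq_some_iff_getElem.1 hf
    simp only [decide_eq_true_eq] at hpj
    rw [List.getD_eq_getElem _ _ hj]
    refine ⟨List.getElem_mem hj, hpj.1, hpj.2, fun v hv hxv hvb => ?_⟩
    obtain ⟨k, hk, rfl⟩ := List.mem_iff_getElem.1 hv
    by_contra! hlt
    have hkj : k < j := by
      by_contra! hjk
      rcases hjk.eq_or_lt with rfl | hjk
      · exact lt_irrefl _ hlt
      · exact lt_asymm hlt (List.pairwise_iff_getElem.1 hrow j k hj hk hjk)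
    simpa [hxv, hvb] using hmin k hkj

theorem le_of_insertRowP_eq_none (h : (insertRowP b x row).2.1 = none) :
    ∀ v ∈ row, x ≤ v → b ≤ v := by
  rcases hf : row.findIdx? (fun y => decide (x ≤ y ∧ y < b)) with _ | j
  · intro v hv hxv
    by_contra! hvb
    simpa [hxv, hvb] using List.findIdx?_eq_none_iff.1 hf v hv
  · simp [insertRowP_of_findIdx?_eq_some hf] at h

end RowInsertion

def insertAppend (b d : ℕ) : List (List ℕ) → ℕ → List (List ℕ)
  | [], x => [[x, d]]
  | row :: rest, x =>
      match insertRowP b x row with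
      | (row', none, _) => (row' ++ [d]) :: rest
      | (row', some y, _) => row' :: insertAppend b d rest y

theorem insertP_snd_ne_nil (b : ℕ) :
    ∀ (rows : List (List ℕ)) (x : ℕ), (insertP b rows x).2 ≠ []
  | [], _ => by simp [insertP]
  | row :: rest, x => by
    rcases hr : insertRowP b x row with ⟨row', _ | y, j⟩ <;> simp [insertP, hr]

theorem modifyRow_cons_succ (row : List ℕ) (rest : List (List ℕ)) (k : ℕ)
    (f : List ℕ → List ℕ) :
    modifyRow (row :: rest) (k + 1) f = row :: modifyRow rest k f := by
  simp [modifyRow]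

theorem modifyRow_insertP (b d : ℕ) : ∀ (rows : List (List ℕ)) (x : ℕ),
    modifyRow (insertP b rows x).1 ((insertP b rows x).2.length - 1) (· ++ [d]) =
      insertAppend b d rows x
  | [], _ => rfl
  | row :: rest, x => by
    rcases hr : insertRowP b x row with ⟨row', _ | y, j⟩
    · simp [insertP, insertAppend, hr, modifyRow]
    · obtain ⟨k, js, hk⟩ := List.exists_cons_of_ne_nil (insertP_snd_ne_nil b rest y)
      have IH := modifyRow_insertP b d rest y
      rw [hk, List.length_cons, Nat.add_sub_cancel] at IH
      simp [insertP, insertAppend, hr, hk, modifyRow_cons_succ, IH]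

theorem obrskStep_fst (PQ : List (List ℕ) × List (List ℕ)) (x b c d : ℕ) :
    (obrskStep PQ (x, b, c, d)).1 = insertAppend b d PQ.1 x :=
  modifyRow_insertP b d PQ.1 x

/-- `Admits b d x rows`: inserting any `x' ≤ x` into `rows` with bound `b`, then appending `d`
to the row where the insertion stops, keeps that row strict. Either every entry is already
`< d`, or the first row holds some `v ∈ [x, b)` with `v < d`; such a `v` forces the insertion
to bump a value `≤ v`, and the remaining rows must admit `v`. -/
def Admits (b d : ℕ) : ℕ → List (List ℕ) → Prop
  | _, [] => True
  | x, row :: rest => (∀ y ∈ (row :: rest).flatten, y < d) ∨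
      ∃ v ∈ row, x ≤ v ∧ v < b ∧ v < d ∧ Admits b d v rest

section Admits

variable {b d : ℕ}

theorem admits_of_forall_lt {rows : List (List ℕ)} (h : ∀ y ∈ rows.flatten, y < d) (x : ℕ) :
    Admits b d x rows := by
  cases rows with
  | nil => trivial
  | cons row rest => exact .inl h

theorem Admits.mono {x x' : ℕ} {rows : List (List ℕ)} (hx : x' ≤ x) (h : Admits b d x rows) :
    Admits b d x' rows := by
  cases rows with
  | nil => trivial
  | cons row rest =>
    rcases h with h | ⟨v, hv, hxv, hvb, hvd, hrest⟩
    · exact .inl h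
    · exact .inr ⟨v, hv, hx.trans hxv, hvb, hvd, hrest⟩

variable {x : ℕ} {row : List ℕ} {rest : List (List ℕ)}

theorem Admits.forall_lt_of_insertRowP_eq_none (h : Admits b d x (row :: rest))
    (hnone : (insertRowP b x row).2.1 = none) : ∀ y ∈ row ++ rest.flatten, y < d := by
  rcases h with hlt | ⟨v, hv, hxv, hvb, -⟩
  · simpa using hlt
  · exact absurd hvb (not_lt.2 (le_of_insertRowP_eq_none hnone v hv hxv))

theorem Admits.of_insertRowP_eq_some (h : Admits b d x (row :: rest))
    (hrow : row.Pairwise (· < ·)) {y : ℕ} (hsome : (insertRowP b x row).2.1 = some y) :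
    y < d ∧ Admits b d y rest := by
  obtain ⟨hyrow, -, -, hmin⟩ := insertRowP_eq_some_spec hrow hsome
  rcases h with hlt | ⟨v, hv, hxv, hvb, hvd, hadm⟩
  · exact ⟨hlt y (by simp [hyrow]), admits_of_forall_lt (fun z hz => hlt z (by simp [hz])) y⟩
  · exact ⟨(hmin v hv hxv hvb).trans_lt hvd, hadm.mono (hmin v hv hxv hvb)⟩

end Admits

structure Prepared (b d x : ℕ) (rows : List (List ℕ)) : Prop where
  pairwise : ∀ row ∈ rows, row.Pairwise (· < ·)
  le : ∀ y ∈ rows.flatten, y ≤ d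
  admits : Admits b d x rows

namespace Prepared

variable {b d x : ℕ} {rows rest : List (List ℕ)}

theorem nil : Prepared b d x [] := ⟨by simp, by simp, trivial⟩

theorem mono {x' : ℕ} (hx : x' ≤ x) (h : Prepared b d x rows) : Prepared b d x' rows :=
  ⟨h.pairwise, h.le, h.admits.mono hx⟩

theorem cons {row : List ℕ} (hrow : row.Pairwise (· < ·)) (hle : ∀ y ∈ row, y ≤ d)
    (hx : x ∈ row) (hxb : x < b) (hxd : x < d) (hrest : Prepared b d x rest) :
    Prepared b d x (row :: rest) where
  pairwise := List.forall_mem_cons.2 ⟨hrow, hrest.pairwise⟩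
  le y hy := by
    rw [List.flatten_cons, List.mem_append] at hy
    exact hy.elim (hle y) (hrest.le y)
  admits := .inr ⟨x, hx, le_rfl, hxb, hxd, hrest.admits⟩

theorem tail {row : List ℕ} (h : Prepared b d x (row :: rest)) (x' : ℕ)
    (hadm : Admits b d x' rest) : Prepared b d x' rest :=
  ⟨fun r hr => h.pairwise r (.tail _ hr), fun y hy => h.le y (by simp [hy]), hadm⟩

theorem insertAppend (h : Prepared b d x rows) (hxb : x < b) (hxd : x < d) :
    Prepared b d x (insertAppend b d rows x) := by
  induction rows generalizing x with
  | nil =>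
    exact cons (by simpa using hxd) (by simpa using hxd.le) (by simp) hxb hxd nil
  | cons row rest ih =>
    have hrow := h.pairwise row List.mem_cons_self
    have hpw := pairwise_insertRowP (b := b) hrow hxb
    have hmem := fun z => mem_insertRowP (b := b) (x := x) (row := row) (z := z)
    have hself := self_mem_insertRowP (b := b) (x := x) (row := row)
    rcases hr : insertRowP b x row with ⟨row', _ | y, j⟩
    · have hlt := h.admits.forall_lt_of_insertRowP_eq_none (by rw [hr])
      rw [hr] at hpw hmem hself
      have hrow' : ∀ z ∈ row', z < d := fun z hz =>
        (hmem z hz).elim (fun hz => hlt z (by simp [hz])) (· ▸ hxd)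
      rw [show OBRSKPaper.insertAppend b d (row :: rest) x = (row' ++ [d]) :: rest by
        simp [OBRSKPaper.insertAppend, hr]]
      refine cons ?_ ?_ (by simp [hself]) hxb hxd
        (h.tail x (admits_of_forall_lt (fun y hy => hlt y (by simp [hy])) x))
      · exact List.pairwise_append.2 ⟨hpw, by simp, fun z hz _ hd => by
          simpa [List.mem_singleton.1 hd] using hrow' z hz⟩
      · simp only [List.mem_append, List.mem_singleton]
        rintro z (hz | rfl)
        exacts [(hrow' z hz).le, le_rfl]
    · have hbump := insertRowP_eq_some_spec (b := b) hrow (by rw [hr])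
      obtain ⟨hyd, hadm⟩ := h.admits.of_insertRowP_eq_some hrow (by rw [hr])
      rw [hr] at hpw hmem hself
      rw [show OBRSKPaper.insertAppend b d (row :: rest) x =
          row' :: OBRSKPaper.insertAppend b d rest y by simp [OBRSKPaper.insertAppend, hr]]
      refine cons hpw (fun z hz => ?_) hself hxb hxd
        ((ih (h.tail y hadm) hbump.2.2.1 hyd).mono hbump.2.1)
      exact (hmem z hz).elim (fun hz => h.le z (by simp [hz])) (· ▸ hxd.le)

theorem of_le {b' d' x' : ℕ} (h : Prepared b d x rows) (hd : d ≤ d')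
    (heq : d = d' → b = b' ∧ x' ≤ x) : Prepared b' d' x' rows := by
  refine ⟨h.pairwise, fun y hy => (h.le y hy).trans hd, ?_⟩
  rcases hd.eq_or_lt with rfl | hlt
  · obtain ⟨rfl, hx⟩ := heq rfl
    exact h.admits.mono hx
  · exact admits_of_forall_lt (fun y hy => (h.le y hy).trans_lt hlt) x'

end Prepared

def Insertable : ℕ × ℕ × ℕ × ℕ → Prop
  | (x, b, _, d) => x < b ∧ x < d

theorem Prepared.obrskStep {x b c d : ℕ} {PQ : List (List ℕ) × List (List ℕ)}
    (h : Prepared b d x PQ.1) (hq : Insertable (x, b, c, d)) :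
    Prepared b d x (obrskStep PQ (x, b, c, d)).1 := by
  rw [obrskStep_fst]
  exact h.insertAppend hq.1 hq.2

def Compatible : ℕ × ℕ × ℕ × ℕ → ℕ × ℕ × ℕ × ℕ → Prop
  | (x, b, _, d), (x', b', _, d') => d ≤ d' ∧ (d = d' → b = b' ∧ x' ≤ x)

theorem pairwise_foldl_obrskStep (qs : List (ℕ × ℕ × ℕ × ℕ)) {x b c d : ℕ}
    {PQ : List (List ℕ) × List (List ℕ)} (hPQ : Prepared b d x PQ.1)
    (hins : ∀ q ∈ (x, b, c, d) :: qs, Insertable q)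
    (hchain : ((x, b, c, d) :: qs).IsChain Compatible) :
    ∀ row ∈ (((x, b, c, d) :: qs).foldl obrskStep PQ).1, row.Pairwise (· < ·) := by
  induction qs generalizing x b c d PQ with
  | nil => exact (hPQ.obrskStep (hins _ List.mem_cons_self)).pairwise
  | cons q qs ih =>
    obtain ⟨x', b', c', d'⟩ := q
    obtain ⟨⟨hd, heq⟩, hchain'⟩ := List.isChain_cons_cons.1 hchain
    exact ih ((hPQ.obrskStep (hins _ List.mem_cons_self)).of_le hd heq)
      (fun q hq => hins q (List.mem_cons_of_mem _ hq)) hchain'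

theorem getD_reverse {α : Type*} {l : List α} {k : ℕ} (h : k < l.length) (x : α) :
    l.reverse.getD k x = l.getD (l.length - 1 - k) x := by
  rw [List.getD_eq_getElem _ _ (by simpa using h), List.getElem_reverse,
    List.getD_eq_getElem _ _ (by omega)]

theorem getD_mem_zip {α β : Type*} {l : List α} {l' : List β} {j : ℕ} (h : j < l.length)
    (h' : j < l'.length) (x : α) (y : β) : (l.getD j x, l'.getD j y) ∈ l.zip l' := by
  rw [List.getD_eq_getElem _ _ h, List.getD_eq_getElem _ _ h', ← List.getElem_zip]
  exact List.getElem_mem (by simp [h, h'])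

namespace ArrayPair

variable {π : ArrayPair}

theorem quads_length (h : π.eqLen) : π.quads.length = π.t := by
  obtain ⟨ha, hc, hd⟩ := h
  simp [quads, ha, hc, hd, t]

theorem quads_getElem (h : π.eqLen) {j : ℕ} (hj : j < π.quads.length) :
    π.quads[j] = (π.a.getD j 0, π.b.getD j 0, π.c.getD (π.t - 1 - j) 0,
      π.d.getD (π.t - 1 - j) 0) := by
  obtain ⟨ha, hc, hd⟩ := h
  have hjt : j < π.t := quads_length ⟨ha, hc, hd⟩ ▸ hj
  simp only [quads, List.getElem_zip, List.getElem_reverse, hc, hd]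
  rw [List.getD_eq_getElem _ _ (ha ▸ hjt), List.getD_eq_getElem _ _ hjt,
    List.getD_eq_getElem _ _ (by omega), List.getD_eq_getElem _ _ (by omega)]
  rfl

theorem insertable_of_mem_quads (hlex : π.SkewSymmLex) (hneg : π.Negative) :
    ∀ q ∈ π.quads, Insertable q := by
  intro q hq
  obtain ⟨j, hj, rfl⟩ := List.mem_iff_getElem.1 hq
  obtain ⟨⟨ha, hc, hd⟩, -, -, -, had, -⟩ := hlex
  have hjt : j < π.t := quads_length ⟨ha, hc, hd⟩ ▸ hj
  rw [quads_getElem ⟨ha, hc, hd⟩ hj]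
  refine ⟨hneg _ (getD_mem_zip (by omega) hjt 0 0), ?_⟩
  have := had _ (getD_mem_zip (l' := π.d.reverse) (j := j) (by omega) (by simpa [hd]) 0 0)
  rwa [getD_reverse (by omega), hd] at this

theorem d_b_mem_entryDual (h : π.eqLen) {k : ℕ} (hk : k < π.t) :
    (π.d.getD k 0, π.b.getD (π.t - 1 - k) 0) ∈ π.entryDual := by
  have hb : π.b.length = π.t := rfl
  have := getD_mem_zip (l := π.d) (l' := π.b.reverse) (j := k) (by rw [h.2.2]; exact hk)
    (by simpa [hb]) 0 0
  rw [getD_reverse (by omega), hb] at this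
  simp only [ArrayPair.entryDual, List.mem_append]
  exact .inr this

theorem isChain_quads (hlex : π.SkewSymmLex) : π.quads.IsChain Compatible := by
  obtain ⟨⟨ha, hc, hd⟩, -, hba, hdc, -, -, hdual, -⟩ := hlex
  rw [List.isChain_iff_getElem]
  intro j hj
  have hjt : j + 1 < π.t := quads_length ⟨ha, hc, hd⟩ ▸ hj
  rw [quads_getElem ⟨ha, hc, hd⟩, quads_getElem ⟨ha, hc, hd⟩]
  have hk : π.t - 1 - (j + 1) + 1 = π.t - 1 - j := by omega
  have hdle := (hdc (π.t - 1 - (j + 1)) (by omega)).1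
  rw [hk] at hdle
  refine ⟨hdle, fun hdeq => ?_⟩
  have hbeq := (hdual _ (d_b_mem_entryDual ⟨ha, hc, hd⟩ (k := π.t - 1 - j) (by omega)) _
    (d_b_mem_entryDual ⟨ha, hc, hd⟩ (k := π.t - 1 - (j + 1)) (by omega))).2.2 hdeq
  rw [show π.t - 1 - (π.t - 1 - j) = j by omega,
    show π.t - 1 - (π.t - 1 - (j + 1)) = j + 1 by omega] at hbeq
  exact ⟨hbeq, (hba j hjt).2 hbeq.symm⟩

end ArrayPair

end OBRSKPaper

open OBRSKPaper

theorem stmt0_general (π : ArrayPair) (hlex : π.SkewSymmLex) (hneg : π.Negative)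
    (i : ℕ) :
    ∀ row ∈ (stepState π i).1, row.Pairwise (· < ·) := by
  rcases h : π.quads.take i with _ | ⟨⟨x, b, c, d⟩, qs⟩
  · simp [stepState, h]
  · have hmem : ∀ q ∈ (x, b, c, d) :: qs, q ∈ π.quads := fun q hq =>
      List.mem_of_mem_take (h ▸ hq)
    rw [stepState, h]
    exact pairwise_foldl_obrskStep qs (PQ := ([], [])) Prepared.nil
      (fun q hq => π.insertable_of_mem_quads hlex hneg q (hmem q hq))
      (h ▸ (π.isChain_quads hlex).take i)

/-- For a pair of negative skew-symmetric lexicographic arrays of degree 2t,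
every intermediate notched tableau `P^(i)` (`1 ≤ i ≤ t`) produced by the OBRSK algorithm
is row strict. -/
theorem stmt0 (π : ArrayPair) (hlex : π.SkewSymmLex) (hneg : π.Negative)
    (i : ℕ) (hi1 : 1 ≤ i) (hi2 : i ≤ π.t) :
    ∀ row ∈ (stepState π i).1, row.Pairwise (· < ·) :=
  stmt0_general π hlex hneg i
end

section
/- For every nonvanishing skew-symmetric notched bitableau (P,Q), the notched bitableau ι(P,Q) is itself a nonvanishing skew-symmetric notched bitableau; the map ι is an involution, i.e. ι(ι(P,Q)) = (P,Q); and ι maps negative skew-symmetric notched bitableaux to positive ones and positive ones to negative ones, hence gives a bijective pairing between the set of negative and the set of positive skew-symmetric notched bitableaux. -/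
open OBRSKPaper
namespace OBRSKPaper

/- Interchanging the two fillings negates every difference of counting functions
`cntLE P z - cntLE Q z`, so it reverses `≤` on rows; `ι` then restores the order by
reversing the rows. -/
theorem diffLE_swap_iff {A B A' B' : List ℕ} : diffLE A B A' B' ↔ diffLE B' A' B A :=
  forall_congr' fun _ => by constructor <;> intro h <;> linarith

theorem diffLT_swap_iff {A B A' B' : List ℕ} : diffLT A B A' B' ↔ diffLT B' A' B A := by
  rw [diffLT, diffLT, diffLE_swap_iff, @diffLE_swap_iff A']

theorem DualityProp.of_subset {l l' : List (ℕ × ℕ)} (h : DualityProp l) (hsub : l' ⊆ l) :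
    DualityProp l' :=
  fun p hp q hq => h p (hsub hp) q (hsub hq)

theorem Bitab.SameShape.length_eq {B : Bitab} (h : B.SameShape) :
    B.P.length = B.Q.length := by
  simpa using congrArg List.length h

@[simp] theorem iota_P (B : Bitab) : (iota B).P = B.Q.reverse := rfl

@[simp] theorem iota_Q (B : Bitab) : (iota B).Q = B.P.reverse := rfl

theorem iota_iota (B : Bitab) : iota (iota B) = B := by
  simp [iota]

theorem iota_P_getD {B : Bitab} (h : B.SameShape) {i : ℕ} (hi : i < B.P.length) :
    (iota B).P.getD i [] = B.Q.getD (B.P.length - 1 - i) [] := by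
  rw [iota_P, List.getD_reverse _ (h.length_eq ▸ hi), h.length_eq]

theorem iota_Q_getD {B : Bitab} {i : ℕ} (hi : i < B.P.length) :
    (iota B).Q.getD i [] = B.P.getD (B.P.length - 1 - i) [] := by
  rw [iota_Q, List.getD_reverse _ hi]

theorem entryDual_iota_subset {B : Bitab} (h : B.SameShape) :
    (iota B).entryDual ⊆ B.entryDual := by
  have hrows : ∀ {q p : List ℕ}, (q, p) ∈ B.Q.reverse.zip B.P.reverse →
      (p, q) ∈ B.P.zip B.Q := by
    intro q p hqp
    rw [List.zip, ← List.reverse_zipWith h.length_eq.symm, List.mem_reverse, ← List.zip] at hqp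
    have := List.mem_map_of_mem (f := Prod.swap) hqp
    rwa [List.zip_swap] at this
  intro x hx
  simp only [Bitab.entryDual, iota_P, iota_Q, List.mem_append, List.mem_flatten, List.mem_map,
    Prod.exists] at hx ⊢
  rcases hx with ⟨_, ⟨q, p, hqp, rfl⟩, hx⟩ | ⟨_, ⟨q, p, hqp, rfl⟩, hx⟩
  · exact Or.inr ⟨_, ⟨p, q, hrows hqp, rfl⟩, hx⟩
  · exact Or.inl ⟨_, ⟨p, q, hrows hqp, rfl⟩, hx⟩

theorem Bitab.Semistandard.iota {B : Bitab} (h : B.Semistandard) : (iota B).Semistandard := by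
  obtain ⟨hshape, ⟨hP, hQ⟩, ⟨hPpos, hQpos⟩, hchain⟩ := h
  refine ⟨by rw [Bitab.SameShape, iota_P, iota_Q, List.map_reverse, List.map_reverse, hshape],
    ⟨by simpa using hQ, by simpa using hP⟩,
    ⟨by simpa using hQpos, by simpa using hPpos⟩, fun i hi => ?_⟩
  have hi' : i + 1 < B.P.length := by simpa [hshape.length_eq] using hi
  rw [iota_P_getD hshape (by omega), iota_Q_getD (by omega), iota_P_getD hshape hi',
    iota_Q_getD hi', diffLE_swap_iff,
    show B.P.length - 1 - i = B.P.length - 1 - (i + 1) + 1 by omega]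
  exact hchain _ (by omega)

theorem Bitab.SkewSymm.iota {B : Bitab} (h : B.SkewSymm) : (iota B).SkewSymm := by
  obtain ⟨hss, heven, hdual⟩ := h
  refine ⟨hss.iota, fun r hr => ?_, hdual.of_subset (entryDual_iota_subset hss.1)⟩
  have hmem : r.length ∈ B.P.map List.length :=
    hss.1 ▸ List.mem_map_of_mem (List.mem_reverse.mp hr)
  obtain ⟨r', hr', hlen⟩ := List.mem_map.mp hmem
  exact hlen ▸ heven r' hr'

theorem Bitab.Nonvanishing.iota {B : Bitab} (h : B.Nonvanishing) : (iota B).Nonvanishing := by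
  obtain ⟨hss, hrows⟩ := h
  refine ⟨hss.iota, fun i hi => ?_⟩
  have hi' : i < B.P.length := by simpa [hss.1.length_eq] using hi
  rw [iota_P_getD hss.1 hi', iota_Q_getD hi']
  exact (hrows (B.P.length - 1 - i) (by omega)).symm.imp
    diffLT_swap_iff.mp diffLT_swap_iff.mp

theorem Bitab.Negative.iota_positive {B : Bitab} (h : B.Negative) : (iota B).Positive := by
  obtain ⟨hss, hlast⟩ := h
  refine ⟨hss.iota, fun hne => ?_⟩
  have hn : 0 < B.P.length := by
    simpa [hss.1.length_eq, List.length_pos_iff] using hne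
  rw [iota_P_getD hss.1 hn, iota_Q_getD hn, diffLT_swap_iff]
  exact hlast _ (by omega)

theorem Bitab.Positive.iota_negative {B : Bitab} (h : B.Positive) : (iota B).Negative := by
  obtain ⟨hss, hfirst⟩ := h
  refine ⟨hss.iota, fun i hi => ?_⟩
  have hn : B.P.length = i + 1 := by simpa [hss.1.length_eq] using hi
  rw [iota_P_getD hss.1 (by omega), iota_Q_getD (by omega), diffLT_swap_iff,
    show B.P.length - 1 - i = 0 by omega]
  exact hfirst (List.ne_nil_of_length_pos (by omega))

end OBRSKPaper

/-- `ι` maps nonvanishing skew-symmetric notched bitableaux to nonvanishing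
skew-symmetric notched bitableaux, is an involution, maps negative ones to positive ones
and vice versa, and gives a bijective pairing between the sets of negative and positive
skew-symmetric notched bitableaux. -/
theorem stmt4 :
    (∀ B : Bitab, B.SkewSymm → B.Nonvanishing →
      (iota B).SkewSymm ∧ (iota B).Nonvanishing) ∧
    (∀ B : Bitab, iota (iota B) = B) ∧
    (∀ B : Bitab, B.SkewSymm → B.Negative → (iota B).Positive) ∧
    (∀ B : Bitab, B.SkewSymm → B.Positive → (iota B).Negative) ∧
    Set.BijOn iota {B : Bitab | B.SkewSymm ∧ B.Negative}
      {B : Bitab | B.SkewSymm ∧ B.Positive} := by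
  refine ⟨fun B hs hn => ⟨hs.iota, hn.iota⟩, iota_iota, fun B _ hn => hn.iota_positive,
    fun B _ hp => hp.iota_negative, ?_⟩
  exact Set.InvOn.bijOn ⟨fun B _ => iota_iota B, fun B _ => iota_iota B⟩
    (fun B hB => ⟨hB.1.iota, hB.2.iota_positive⟩)
    (fun B hB => ⟨hB.1.iota, hB.2.iota_negative⟩)
end

section
/- For every pair {π1,π2} of skew-symmetric lexicographic arrays, L({π1,π2}) := {l(π1), l^t(π2)} is again a pair of skew-symmetric lexicographic arrays; L is an involution; and L maps pairs of negative skew-symmetric lexicographic arrays to pairs of positive ones and vice versa, hence gives a bijective pairing between the set of all pairs of negative and the set of all pairs of positive skew-symmetric lexicographic arrays. -/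
open OBRSKPaper

/-! Duality forces the second array of a skew-symmetric pair to be the image of the first
under one strictly order-reversing map `δ` on entries, read from right to left:
`c = reverse (map δ a)` and `d = reverse (map δ b)`.  As `δ × δ` reverses the lexicographic
order of columns, sorting the columns of `π2` amounts to sorting those of `π1`, applying `δ`
and reversing, so `L {π1, π2}` has the same shape with the same `δ`.  Its lexicographic
conditions hold by construction, its entries and its pairs (entry, dual) are among those of
`{π1, π2}`, and since its columns are those of `π1` with the rows switched, its conditions
(iii) and (iv) are (iv) and (iii) for `{π1, π2}`; (vi) follows from duality alone.  Switching
the rows of a lexicographic array and sorting twice gives it back, so `L` is an involution,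
and the switch exchanges negative and positive. -/

open List

namespace OBRSKPaper

lemma lexSortKey_eq_true {x y : ℕ × ℕ} : lexSortKey x y = true ↔ toLex y ≤ toLex x := by
  simp only [lexSortKey, decide_eq_true_eq, Prod.Lex.le_iff, ofLex_toLex]
  exact or_congr_right (and_congr_left' eq_comm)

lemma pairwise_mergeSort_lexSortKey (l : List (ℕ × ℕ)) :
    (l.mergeSort lexSortKey).Pairwise (fun x y => toLex y ≤ toLex x) := by
  simpa only [lexSortKey_eq_true] using
    pairwise_mergeSort (le := lexSortKey)
      (fun x y z hxy hyz => lexSortKey_eq_true.2 <|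
        (lexSortKey_eq_true.1 hyz).trans (lexSortKey_eq_true.1 hxy))
      (fun x y => by simpa only [Bool.or_eq_true, lexSortKey_eq_true] using le_total _ _) l

lemma mergeSort_lexSortKey_eq {l m : List (ℕ × ℕ)} (hlm : l ~ m)
    (hm : m.Pairwise (fun x y => toLex y ≤ toLex x)) : l.mergeSort lexSortKey = m :=
  ((mergeSort_perm l lexSortKey).trans hlm).eq_of_pairwise
    (fun _ _ _ _ h₁ h₂ => toLex.injective (le_antisymm h₂ h₁))
    (pairwise_mergeSort_lexSortKey l) hm

lemma toLex_prodMap_le_of_strictAntiOn {δ : ℕ → ℕ} {S : Set ℕ} (hδ : StrictAntiOn δ S)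
    {p q : ℕ × ℕ} (hp₁ : p.1 ∈ S) (hp₂ : p.2 ∈ S) (hq₁ : q.1 ∈ S) (hq₂ : q.2 ∈ S)
    (hpq : toLex p ≤ toLex q) : toLex (Prod.map δ δ q) ≤ toLex (Prod.map δ δ p) := by
  simp only [Prod.Lex.le_iff, ofLex_toLex, Prod.map_fst, Prod.map_snd] at hpq ⊢
  rcases hpq with h | ⟨h₁, h₂⟩
  · exact Or.inl (hδ hp₁ hq₁ h)
  · exact Or.inr ⟨by rw [h₁], hδ.antitoneOn hp₂ hq₂ h₂⟩

lemma lexTwoRow_map_iff (s : List (ℕ × ℕ)) :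
    LexTwoRow (s.map Prod.fst) (s.map Prod.snd) ↔
      s.Pairwise (fun x y => toLex y ≤ toLex x) := by
  have : Trans (fun x y : ℕ × ℕ => toLex y ≤ toLex x) (fun x y => toLex y ≤ toLex x)
      (fun x y => toLex y ≤ toLex x) := ⟨fun h₁ h₂ => h₂.trans h₁⟩
  rw [← isChain_iff_pairwise, isChain_iff_getElem]
  simp only [LexTwoRow, length_map, Prod.Lex.le_iff, ofLex_toLex]
  refine forall_congr' fun k => forall_congr' fun hk => ?_
  simp only [getD_eq_getElem _ _ (by simpa using hk : k + 1 < (s.map Prod.fst).length),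
    getD_eq_getElem _ _ (by simpa using hk : k + 1 < (s.map Prod.snd).length),
    getD_eq_getElem _ _ (by simp; omega : k < (s.map Prod.fst).length),
    getD_eq_getElem _ _ (by simp; omega : k < (s.map Prod.snd).length), getElem_map]
  omega

lemma map_eq_of_forall_mem_zip {α β : Type*} {l : List α} {m : List β} {f : α → β}
    (hlm : l.length = m.length) (h : ∀ p ∈ l.zip m, f p.1 = p.2) : l.map f = m := by
  conv_lhs => rw [← map_fst_zip hlm.le, map_map]
  conv_rhs => rw [← map_snd_zip hlm.ge]
  exact map_congr_left h

lemma zip_map_self {α β : Type*} (l : List α) (f : α → β) :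
    l.zip (l.map f) = l.map fun x => (x, f x) := by
  simpa using zip_map' (f := id) (g := f) (l := l)

lemma map_self_zip {α β : Type*} (l : List α) (f : α → β) :
    (l.map f).zip l = l.map fun x => (f x, x) := by
  simpa using zip_map' (f := f) (g := id) (l := l)

lemma forall_mem_zip_map_iff {α β γ : Type*} {u : List α} {v : List β} {f : β → γ}
    {P : α × γ → Prop} :
    (∀ p ∈ u.zip (v.map f), P p) ↔ ∀ p ∈ u.zip v, P (p.1, f p.2) := by
  rw [zip_map_right, forall_mem_map]
  rfl

lemma getD_mem_zip_reverse {u v : List ℕ} (huv : u.length = v.length) {i : ℕ}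
    (hi : i < u.length) : (u.getD i 0, v.getD (v.length - 1 - i) 0) ∈ u.zip v.reverse := by
  rw [getD_eq_getElem?_getD, getD_eq_getElem?_getD,
    ← getElem?_reverse' (l := v) (i := i) (by omega), getElem?_eq_getElem hi, getElem?_eq_getElem (by simp; omega)]
  exact mem_iff_getElem.2 ⟨i, by simp; omega, by simp⟩

def sortCols (u v : List ℕ) : List (ℕ × ℕ) := (u.zip v).mergeSort lexSortKey

section sortCols

variable (u v : List ℕ)

lemma sortCols_perm : sortCols u v ~ u.zip v := mergeSort_perm _ _

lemma pairwise_sortCols : (sortCols u v).Pairwise (fun x y => toLex y ≤ toLex x) :=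
  pairwise_mergeSort_lexSortKey _

variable {u v} in
lemma mem_of_mem_map_fst_sortCols {x : ℕ} (hx : x ∈ (sortCols u v).map Prod.fst) : x ∈ u := by
  obtain ⟨p, hp, rfl⟩ := mem_map.1 hx
  exact (of_mem_zip ((sortCols_perm u v).subset hp)).1

variable {u v} in
lemma mem_of_mem_map_snd_sortCols {x : ℕ} (hx : x ∈ (sortCols u v).map Prod.snd) : x ∈ v := by
  obtain ⟨p, hp, rfl⟩ := mem_map.1 hx
  exact (of_mem_zip ((sortCols_perm u v).subset hp)).2

lemma zip_map_snd_map_fst_sortCols_perm :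
    ((sortCols u v).map Prod.snd).zip ((sortCols u v).map Prod.fst) ~ v.zip u := by
  rw [zip_map', ← zip_swap]
  exact (sortCols_perm u v).map Prod.swap

lemma sortCols_map_snd_map_fst {u v : List ℕ} (huv : u.length = v.length)
    (hlex : LexTwoRow v u) :
    sortCols ((sortCols u v).map Prod.snd) ((sortCols u v).map Prod.fst) = v.zip u := by
  refine mergeSort_lexSortKey_eq (zip_map_snd_map_fst_sortCols_perm u v) ?_
  rwa [← lexTwoRow_map_iff, map_fst_zip huv.ge, map_snd_zip huv.le]

end sortCols

lemma DualityProp.mono {l l' : List (ℕ × ℕ)} (h : DualityProp l) (hl : l' ⊆ l) :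
    DualityProp l' := fun p hp q hq => h p (hl hp) q (hl hq)

namespace ArrayPair

variable {π : ArrayPair}

lemma Lmap_eq (π : ArrayPair) : Lmap π =
    ⟨(sortCols π.a π.b).map Prod.snd, (sortCols π.a π.b).map Prod.fst,
      (sortCols π.c π.d).map Prod.snd, (sortCols π.c π.d).map Prod.fst⟩ := rfl

lemma lexTwoRow_Lmap_b_a (π : ArrayPair) : LexTwoRow (Lmap π).b (Lmap π).a :=
  (lexTwoRow_map_iff _).2 (pairwise_sortCols _ _)

lemma lexTwoRow_Lmap_d_c (π : ArrayPair) : LexTwoRow (Lmap π).d (Lmap π).c :=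
  (lexTwoRow_map_iff _).2 (pairwise_sortCols _ _)

lemma zip_Lmap_b_a (π : ArrayPair) : (Lmap π).b.zip (Lmap π).a = sortCols π.a π.b := by
  simp [Lmap_eq, zip_map']

lemma zip_Lmap_a_b_perm (π : ArrayPair) : (Lmap π).a.zip (Lmap π).b ~ π.b.zip π.a :=
  zip_map_snd_map_fst_sortCols_perm _ _

lemma Lmap_Lmap (hab : π.a.length = π.b.length) (hcd : π.c.length = π.d.length)
    (hba : LexTwoRow π.b π.a) (hdc : LexTwoRow π.d π.c) : Lmap (Lmap π) = π := by
  rw [Lmap_eq (Lmap π)]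
  simp only [Lmap_eq π, sortCols_map_snd_map_fst hab hba, sortCols_map_snd_map_fst hcd hdc,
    map_fst_zip hab.ge, map_snd_zip hab.le, map_fst_zip hcd.ge, map_snd_zip hcd.le]

lemma eqLen_Lmap (h : π.eqLen) : (Lmap π).eqLen := by
  obtain ⟨ha, hc, hd⟩ := h
  simp only [t] at ha hc hd
  simp only [eqLen, t, Lmap_eq, length_map, (sortCols_perm _ _).length_eq, length_zip, true_and]
  omega

lemma mem_Lmap_a_append_b {x : ℕ} (hx : x ∈ (Lmap π).a ++ (Lmap π).b) : x ∈ π.a ++ π.b := by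
  rw [mem_append, or_comm] at hx
  rw [mem_append]
  exact hx.imp mem_of_mem_map_fst_sortCols mem_of_mem_map_snd_sortCols

lemma mem_entries_Lmap {x : ℕ}
    (hx : x ∈ (Lmap π).a ++ (Lmap π).b ++ (Lmap π).c ++ (Lmap π).d) :
    x ∈ π.a ++ π.b ++ π.c ++ π.d := by
  simp only [mem_append] at hx ⊢
  rcases hx with (hab | hc) | hd
  · exact Or.inl (Or.inl (mem_append.1 (mem_Lmap_a_append_b (mem_append.2 hab))))
  · exact Or.inr (mem_of_mem_map_snd_sortCols hc)
  · exact Or.inl (Or.inr (mem_of_mem_map_fst_sortCols hd))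

lemma Negative.Lmap_positive (h : π.Negative) : (Lmap π).Positive := fun p hp =>
  h p.swap (zip_swap π.b π.a ▸ mem_map_of_mem ((zip_Lmap_a_b_perm π).subset hp))

lemma Positive.Lmap_negative (h : π.Positive) : (Lmap π).Negative := fun p hp =>
  h p.swap (zip_swap π.b π.a ▸ mem_map_of_mem ((zip_Lmap_a_b_perm π).subset hp))

lemma signCond_of_dualityProp (hlen : π.eqLen) (hED : DualityProp π.entryDual) :
    ∀ i < π.t,
      (π.a.getD i 0 < π.b.getD i 0 → π.d.getD (π.t - 1 - i) 0 < π.c.getD (π.t - 1 - i) 0) ∧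
      (π.b.getD i 0 < π.a.getD i 0 → π.c.getD (π.t - 1 - i) 0 < π.d.getD (π.t - 1 - i) 0) := by
  obtain ⟨ha, hc, hd⟩ := hlen
  intro i hi
  have hac : (π.a.getD i 0, π.c.getD (π.t - 1 - i) 0) ∈ π.entryDual := by
    have := getD_mem_zip_reverse (ha.trans hc.symm) (ha ▸ hi)
    rw [hc] at this
    exact mem_append_left _ (mem_append_left _ (mem_append_left _ this))
  have hbd : (π.b.getD i 0, π.d.getD (π.t - 1 - i) 0) ∈ π.entryDual := by
    have := getD_mem_zip_reverse hd.symm hi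
    rw [hd] at this
    exact mem_append_left _ (mem_append_left _ (mem_append_right _ this))
  exact ⟨(hED _ hac _ hbd).2.1, (hED _ hbd _ hac).2.1⟩

open Classical in
noncomputable def dualFun (π : ArrayPair) (x : ℕ) : ℕ :=
  if h : ∃ y, (x, y) ∈ π.entryDual then h.choose else 0

lemma dualFun_eq_of_mem (hED : DualityProp π.entryDual) {x y : ℕ}
    (hxy : (x, y) ∈ π.entryDual) : π.dualFun x = y := by
  have hx : ∃ y, (x, y) ∈ π.entryDual := ⟨y, hxy⟩
  rw [dualFun, dif_pos hx]
  exact (hED _ hx.choose_spec _ hxy).2.2 rfl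

lemma reverse_c_eq_map_dualFun (hlen : π.eqLen) (hED : DualityProp π.entryDual) :
    π.c.reverse = π.a.map π.dualFun := by
  obtain ⟨ha, hc, -⟩ := hlen
  refine (map_eq_of_forall_mem_zip (by simp [ha, hc]) fun p hp => dualFun_eq_of_mem hED ?_).symm
  exact mem_append_left _ (mem_append_left _ (mem_append_left _ hp))

lemma reverse_d_eq_map_dualFun (hlen : π.eqLen) (hED : DualityProp π.entryDual) :
    π.d.reverse = π.b.map π.dualFun := by
  obtain ⟨-, -, hd⟩ := hlen
  refine (map_eq_of_forall_mem_zip (by simp [hd, t]) fun p hp => dualFun_eq_of_mem hED ?_).symm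
  exact mem_append_left _ (mem_append_left _ (mem_append_right _ hp))

def HasDualMap (π : ArrayPair) (δ : ℕ → ℕ) : Prop :=
  π.c.reverse = π.a.map δ ∧ π.d.reverse = π.b.map δ ∧ StrictAntiOn δ {x | x ∈ π.a ++ π.b}

lemma mem_entryDual_iff {δ : ℕ → ℕ} (hc : π.c.reverse = π.a.map δ)
    (hd : π.d.reverse = π.b.map δ) {p : ℕ × ℕ} :
    p ∈ π.entryDual ↔ ∃ x ∈ π.a ++ π.b, p = (x, δ x) ∨ p = (δ x, x) := by
  have hc' : π.c = (π.a.map δ).reverse := by rw [← hc, reverse_reverse]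
  have hd' : π.d = (π.b.map δ).reverse := by rw [← hd, reverse_reverse]
  have hca : π.c.zip π.a.reverse = ((π.a.map δ).zip π.a).reverse := by
    rw [hc', zip_eq_zipWith, zip_eq_zipWith, reverse_zipWith (by simp)]
  have hdb : π.d.zip π.b.reverse = ((π.b.map δ).zip π.b).reverse := by
    rw [hd', zip_eq_zipWith, zip_eq_zipWith, reverse_zipWith (by simp)]
  simp only [entryDual, hc, hd, hca, hdb, zip_map_self, map_self_zip, mem_append, mem_reverse,
    mem_map]
  aesop

lemma hasDualMap_dualFun (hlen : π.eqLen) (hED : DualityProp π.entryDual) :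
    π.HasDualMap π.dualFun := by
  have hc := reverse_c_eq_map_dualFun hlen hED
  have hd := reverse_d_eq_map_dualFun hlen hED
  refine ⟨hc, hd, fun x hx y hy hxy => ?_⟩
  exact (hED _ ((mem_entryDual_iff hc hd).2 ⟨x, hx, Or.inl rfl⟩)
    _ ((mem_entryDual_iff hc hd).2 ⟨y, hy, Or.inl rfl⟩)).2.1 hxy

lemma HasDualMap.sortCols_c_d {δ : ℕ → ℕ} (h : π.HasDualMap δ) (hab : π.a.length = π.b.length) :
    sortCols π.c π.d = ((sortCols π.a π.b).map (Prod.map δ δ)).reverse := by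
  obtain ⟨hc, hd, hδ⟩ := h
  have hcd : π.c.zip π.d = ((π.a.zip π.b).map (Prod.map δ δ)).reverse := by
    rw [← zip_map, ← hc, ← hd, zip_eq_zipWith, zip_eq_zipWith,
      reverse_zipWith (by simp only [hc, hd, length_map, hab]),
      reverse_reverse, reverse_reverse]
  refine mergeSort_lexSortKey_eq ?_ ?_
  · rw [hcd]
    exact (reverse_perm _).trans (((sortCols_perm _ _).map _).symm.trans (reverse_perm _).symm)
  · rw [pairwise_reverse, pairwise_map]
    refine (pairwise_sortCols _ _).imp_of_mem fun hp hq hqp => ?_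
    have hp' := of_mem_zip ((sortCols_perm _ _).subset hp)
    have hq' := of_mem_zip ((sortCols_perm _ _).subset hq)
    exact toLex_prodMap_le_of_strictAntiOn hδ (mem_append_left _ hq'.1)
      (mem_append_right _ hq'.2) (mem_append_left _ hp'.1) (mem_append_right _ hp'.2) hqp

lemma hasDualMap_Lmap {δ : ℕ → ℕ} (h : π.HasDualMap δ) (hab : π.a.length = π.b.length) :
    (Lmap π).HasDualMap δ := by
  refine ⟨?_, ?_, h.2.2.mono fun x hx => mem_Lmap_a_append_b hx⟩ <;>
    simp [Lmap_eq, h.sortCols_c_d hab, map_reverse, map_map, Function.comp_def]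

lemma HasDualMap.entryDual_Lmap_subset {δ : ℕ → ℕ} (h : π.HasDualMap δ)
    (hab : π.a.length = π.b.length) : (Lmap π).entryDual ⊆ π.entryDual := by
  obtain ⟨hc', hd', -⟩ := hasDualMap_Lmap h hab
  intro p hp
  obtain ⟨x, hx, hpx⟩ := (mem_entryDual_iff hc' hd').1 hp
  exact (mem_entryDual_iff h.1 h.2.1).2 ⟨x, mem_Lmap_a_append_b hx, hpx⟩

end ArrayPair

open ArrayPair

theorem skewSymmLex_Lmap {π : ArrayPair} (hπ : π.SkewSymmLex) : (Lmap π).SkewSymmLex := by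
  obtain ⟨hlen, hpos, -, -, had, hbc, hED, -⟩ := hπ
  have hab : π.a.length = π.b.length := hlen.1
  have hδ := hasDualMap_dualFun hlen hED
  obtain ⟨hc', hd', -⟩ := hasDualMap_Lmap hδ hab
  have hlen' := eqLen_Lmap hlen
  have hED' := hED.mono (hδ.entryDual_Lmap_subset hab)
  refine ⟨hlen', fun x hx => hpos x (mem_entries_Lmap hx), lexTwoRow_Lmap_b_a π,
    lexTwoRow_Lmap_d_c π, ?_, ?_, hED', signCond_of_dualityProp hlen' hED'⟩
  · rw [hd', forall_mem_zip_map_iff]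
    rw [hδ.1, forall_mem_zip_map_iff] at hbc
    exact fun p hp => hbc p ((zip_Lmap_a_b_perm π).subset hp)
  · rw [hc', forall_mem_zip_map_iff, zip_Lmap_b_a]
    rw [hδ.2.1, forall_mem_zip_map_iff] at had
    exact fun p hp => had p ((sortCols_perm _ _).subset hp)

theorem Lmap_Lmap_of_skewSymmLex {π : ArrayPair} (hπ : π.SkewSymmLex) : Lmap (Lmap π) = π :=
  Lmap_Lmap hπ.1.1 (hπ.1.2.1.trans hπ.1.2.2.symm) hπ.2.2.1 hπ.2.2.2.1

end OBRSKPaper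

/-- `L` maps pairs of skew-symmetric lexicographic arrays to pairs of
skew-symmetric lexicographic arrays, is an involution, maps pairs of negative ones to pairs
of positive ones and vice versa, and gives a bijective pairing between the sets of pairs of
negative and of positive skew-symmetric lexicographic arrays. -/
theorem stmt5 :
    (∀ π : ArrayPair, π.SkewSymmLex → (Lmap π).SkewSymmLex) ∧
    (∀ π : ArrayPair, π.SkewSymmLex → Lmap (Lmap π) = π) ∧
    (∀ π : ArrayPair, π.SkewSymmLex → π.Negative → (Lmap π).Positive) ∧
    (∀ π : ArrayPair, π.SkewSymmLex → π.Positive → (Lmap π).Negative) ∧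
    Set.BijOn Lmap {π : ArrayPair | π.SkewSymmLex ∧ π.Negative}
      {π : ArrayPair | π.SkewSymmLex ∧ π.Positive} := by
  refine ⟨fun π => skewSymmLex_Lmap, fun π => Lmap_Lmap_of_skewSymmLex,
    fun π _ h => h.Lmap_positive, fun π _ h => h.Lmap_negative, ?_⟩
  refine Set.InvOn.bijOn ⟨fun π hπ => Lmap_Lmap_of_skewSymmLex hπ.1,
    fun π hπ => Lmap_Lmap_of_skewSymmLex hπ.1⟩ ?_ ?_
  · exact fun π hπ => ⟨skewSymmLex_Lmap hπ.1, hπ.2.Lmap_positive⟩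
  · exact fun π hπ => ⟨skewSymmLex_Lmap hπ.1, hπ.2.Lmap_negative⟩
end
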